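/- Let ν > 0 be real and let g : ℕ → ℝ be a sequence such that ∑_{k=0}^∞ |g(k)|·Γ(ν+k) < ∞. Then the power series ∑_{k=0}^∞ g(k) x^k converges for every x ≥ 0, the integral ∫_0^∞ x^{ν−1} e^{−x} (∑_{k=0}^∞ g(k) x^k) dx converges, and it equals Γ(ν)·∑_{k=0}^∞ (ν)_k·g(k), where (ν)_k = Γ(ν+k)/Γ(ν) is the Pochhammer symbol (Carr's identity). -/

import Mathlib

/-!
Expanding the power series under the integral, the `k`-th term integrates to `g k * Γ(ν + k)`,
and the hypothesis says precisely that these integrals are absolutely summable; this both makes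
the integrand integrable and justifies exchanging sum and integral. The power series converges
everywhere because `|x| ^ k / Γ(ν + k)` is summable (ratio test), hence bounded, so
`|g k| * |x| ^ k` is dominated by a multiple of `|g k| * Γ(ν + k)`.
-/

open MeasureTheory Set Filter
open scoped ENNReal

namespace MeasureTheory

variable {α ι E : Type*} [MeasurableSpace α] {μ : Measure α} [Countable ι]
  [NormedAddCommGroup E] [CompleteSpace E]

theorem integrable_tsum_of_summable_integral_norm {F : ι → α → E}
    (hF_int : ∀ i, Integrable (F i) μ) (hF_sum : Summable fun i ↦ ∫ a, ‖F i a‖ ∂μ) :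
    Integrable (fun a ↦ ∑' i, F i a) μ := by
  have hF_enorm : ∀ i, AEMeasurable (fun a ↦ ‖F i a‖ₑ) μ := fun i ↦ (hF_int i).1.enorm
  have hlintegral : ∫⁻ a, ∑' i, ‖F i a‖ₑ ∂μ < ∞ := by
    simp_rw [lintegral_tsum hF_enorm, ← ofReal_integral_norm_eq_lintegral_enorm (hF_int _),
      ← ENNReal.ofReal_tsum_of_nonneg (fun i ↦ integral_nonneg fun a ↦ norm_nonneg _) hF_sum]
    exact ENNReal.ofReal_lt_top
  have hsummable : ∀ᵐ a ∂μ, Summable (F · a) := by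
    filter_upwards [ae_lt_top' (AEMeasurable.tsum hF_enorm) hlintegral.ne] with a ha
    exact (tsum_enorm_ne_top_iff_summable_norm.1 ha.ne).of_norm
  refine ⟨aestronglyMeasurable_of_tendsto_ae atTop
    (fun s ↦ Finset.aestronglyMeasurable_fun_sum s fun i _ ↦ (hF_int i).1)
    (hsummable.mono fun a ha ↦ ha.hasSum), ?_⟩
  exact (lintegral_mono fun a ↦ enorm_tsum_le_tsum_enorm).trans_lt hlintegral

end MeasureTheory

namespace Real

variable {ν : ℝ}

theorem summable_pow_div_Gamma_add (hν : 0 < ν) (x : ℝ) :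
    Summable fun k : ℕ ↦ x ^ k / Gamma (ν + k) := by
  refine summable_of_ratio_norm_eventually_le (r := 1 / 2) (by norm_num) ?_
  filter_upwards [eventually_ge_atTop ⌈2 * |x|⌉₊] with n hn
  have hνn : 0 < ν + n := by positivity
  have hx_le : 2 * |x| ≤ ν + n := (Nat.ceil_le.1 hn).trans (le_add_of_nonneg_left hν.le)
  have hΓ : 0 < Gamma (ν + n) := Gamma_pos_of_pos hνn
  have hΓ_succ : Gamma (ν + (n + 1 : ℕ)) = (ν + n) * Gamma (ν + n) := by
    rw [Nat.cast_succ, ← add_assoc, Gamma_add_one hνn.ne']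
  simp only [hΓ_succ, norm_div, norm_mul, norm_pow, norm_eq_abs, abs_of_pos hΓ, abs_of_pos hνn,
    pow_succ', mul_div_mul_comm]
  refine mul_le_mul_of_nonneg_right ?_ (by positivity)
  rw [div_le_iff₀ hνn]
  linarith

theorem summable_abs_mul_pow_of_summable_abs_mul_Gamma (hν : 0 < ν) {g : ℕ → ℝ}
    (hg : Summable fun k ↦ |g k| * Gamma (ν + k)) (x : ℝ) :
    Summable fun k ↦ |g k * x ^ k| := by
  have hΓ (k : ℕ) : 0 < Gamma (ν + k) := Gamma_pos_of_pos (by positivity)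
  have hpow := summable_pow_div_Gamma_add hν |x|
  refine .of_nonneg_of_le (fun k ↦ abs_nonneg _) (fun k ↦ ?_)
    (hg.mul_right (∑' k : ℕ, |x| ^ k / Gamma (ν + k)))
  calc |g k * x ^ k| = |g k| * Gamma (ν + k) * (|x| ^ k / Gamma (ν + k)) := by
        rw [abs_mul, abs_pow, mul_assoc, mul_div_cancel₀ _ (hΓ k).ne']
    _ ≤ _ := by
        gcongr
        exact hpow.le_tsum k fun j _ ↦ div_nonneg (by positivity) (hΓ j).le

theorem eqOn_rpow_mul_exp_neg_mul_pow (ν : ℝ) (k : ℕ) :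
    EqOn (fun x ↦ x ^ (ν - 1) * exp (-x) * x ^ k) (fun x ↦ exp (-x) * x ^ (ν + k - 1))
      (Ioi 0) := by
  intro x hx
  simp only
  rw [add_sub_right_comm, rpow_add hx, rpow_natCast]
  ring

theorem integrableOn_rpow_mul_exp_neg_mul_pow (hν : 0 < ν) (k : ℕ) :
    IntegrableOn (fun x ↦ x ^ (ν - 1) * exp (-x) * x ^ k) (Ioi 0) :=
  (GammaIntegral_convergent (by positivity)).congr_fun
    (eqOn_rpow_mul_exp_neg_mul_pow ν k).symm measurableSet_Ioi

theorem integral_rpow_mul_exp_neg_mul_pow (hν : 0 < ν) (k : ℕ) :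
    ∫ x in Ioi 0, x ^ (ν - 1) * exp (-x) * x ^ k = Gamma (ν + k) := by
  rw [setIntegral_congr_fun measurableSet_Ioi (eqOn_rpow_mul_exp_neg_mul_pow ν k),
    Gamma_eq_integral (by positivity)]

end Real

theorem carr_identity
    (ν : ℝ) (hν : 0 < ν) (g : ℕ → ℝ)
    (hsum : Summable (fun k : ℕ => |g k| * Real.Gamma (ν + k))) :
    (∀ x : ℝ, 0 ≤ x → Summable (fun k : ℕ => g k * x ^ k)) ∧
    IntegrableOn
      (fun x : ℝ => x ^ (ν - 1) * Real.exp (-x) * ∑' k : ℕ, g k * x ^ k) (Ioi 0) ∧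
    ∫ x : ℝ in Ioi 0, x ^ (ν - 1) * Real.exp (-x) * ∑' k : ℕ, g k * x ^ k
      = Real.Gamma ν * ∑' k : ℕ, (Real.Gamma (ν + k) / Real.Gamma ν) * g k := by
  set F : ℕ → ℝ → ℝ := fun k x ↦ g k * (x ^ (ν - 1) * Real.exp (-x) * x ^ k)
  have hF_int (k : ℕ) : IntegrableOn (F k) (Ioi 0) :=
    (Real.integrableOn_rpow_mul_exp_neg_mul_pow hν k).const_mul (g k)
  have hF_norm (k : ℕ) : ∫ x in Ioi 0, ‖F k x‖ = |g k| * Real.Gamma (ν + k) := by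
    simp only [F, norm_mul, Real.norm_eq_abs, Real.abs_exp, integral_const_mul]
    rw [← Real.integral_rpow_mul_exp_neg_mul_pow hν k]
    refine congrArg _ (setIntegral_congr_fun measurableSet_Ioi fun x (hx : 0 < x) ↦ ?_)
    rw [abs_of_pos (Real.rpow_pos_of_pos hx _), abs_of_pos (pow_pos hx k)]
  have hF_sum : Summable fun k ↦ ∫ x in Ioi 0, ‖F k x‖ := by simpa only [hF_norm] using hsum
  have h_integrand : (fun x : ℝ ↦ x ^ (ν - 1) * Real.exp (-x) * ∑' k : ℕ, g k * x ^ k) =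
      fun x ↦ ∑' k, F k x := by
    ext x
    rw [← tsum_mul_left]
    exact tsum_congr fun k ↦ by ring
  refine ⟨fun x _ ↦ (Real.summable_abs_mul_pow_of_summable_abs_mul_Gamma hν hsum x).of_abs,
    h_integrand ▸ integrable_tsum_of_summable_integral_norm hF_int hF_sum, ?_⟩
  rw [h_integrand, ← integral_tsum_of_summable_integral_norm hF_int hF_sum, ← tsum_mul_left]
  refine tsum_congr fun k ↦ ?_
  rw [integral_const_mul, Real.integral_rpow_mul_exp_neg_mul_pow hν k, ← mul_assoc,
    mul_div_cancel₀ _ (Real.Gamma_pos_of_pos hν).ne', mul_comm]
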